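/- arXiv:1507.01166 — 10 statements merged into one kernel-verified Lean document; each statement's English description precedes it below -/
import Mathlib

section
/- Let X be a separable complex Banach space, let r ≥ 1, and let T₁, …, T_r be bounded linear operators on X. Suppose there exist an increasing sequence (n_k) of positive integers and, for each 1 ≤ i ≤ r, scalars λ^{(i)}_{n_k} ∈ ℂ with 0 < |λ^{(i)}_{n_k}| ≤ 1 for all k, dense subsets X_i, Y_i ⊆ X, and maps S_i : Y_i → Y_i such that for all x_i ∈ X_i and y_i ∈ Y_i, as k → ∞: (1) λ^{(i)}_{n_k} T_i^{n_k} x_i → 0 for each i; (2) (1/λ^{(i)}_{n_k}) S_i^{n_k} y_i → 0 for each i; (3) T_i^{n_k} S_i^{n_k} y_i → y_i for each i. Then T₁ ⊕ … ⊕ T_r is r-bitransitive. -/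
open Filter Topology Set Pointwise

variable {X : Type*} [NormedAddCommGroup X] [NormedSpace ℂ X]

/-- `T` is compound: for all nonempty open `U, V` there are `N` and scalars `α n`
with `0 < ‖α n‖ ≤ 1` such that `T^n (α n • U) ∩ V ≠ ∅` for all `n ≥ N`. -/
def Compound (T : X →L[ℂ] X) : Prop :=
  ∀ U V : Set X, IsOpen U → U.Nonempty → IsOpen V → V.Nonempty →
    ∃ N : ℕ, ∃ α : ℕ → ℂ, ∀ n ≥ N,
      (0 < ‖α n‖ ∧ ‖α n‖ ≤ 1) ∧ (((T ^ n) '' (α n • U)) ∩ V).Nonempty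

/-- `T` is topologically mixing. -/
def TopologicallyMixing (T : X →L[ℂ] X) : Prop :=
  ∀ U V : Set X, IsOpen U → U.Nonempty → IsOpen V → V.Nonempty →
    ∃ N : ℕ, ∀ n ≥ N, (((T ^ n) '' U) ∩ V).Nonempty

/-- `T` is disk transitive. -/
def DiskTransitive (T : X →L[ℂ] X) : Prop :=
  ∀ U V : Set X, IsOpen U → U.Nonempty → IsOpen V → V.Nonempty →
    ∃ n : ℕ, ∃ α : ℂ, 0 < ‖α‖ ∧ ‖α‖ ≤ 1 ∧ (((T ^ n) '' (α • U)) ∩ V).Nonempty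

/-- The direct sum `T 0 ⊕ ⋯ ⊕ T (k-1)` is `k`-bitransitive: for all nonempty open
`U i, V i` there are `n` and scalars `α i` with `0 < ‖α i‖ ≤ 1` such that
`(T 0 ⊕ ⋯)^n (α 0 • U 0 ⊕ ⋯) ∩ (V 0 ⊕ ⋯) ≠ ∅`, stated componentwise (an
intersection of product sets is nonempty iff each componentwise intersection is). -/
def kBitransitive {k : ℕ} (T : Fin k → X →L[ℂ] X) : Prop :=
  ∀ U V : Fin k → Set X,
    (∀ i, IsOpen (U i) ∧ (U i).Nonempty) →
    (∀ i, IsOpen (V i) ∧ (V i).Nonempty) →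
    ∃ n : ℕ, ∃ α : Fin k → ℂ,
      (∀ i, 0 < ‖α i‖ ∧ ‖α i‖ ≤ 1) ∧
      ∀ i, (((T i ^ n) '' (α i • U i)) ∩ V i).Nonempty

/-- The cross set `C_T(A,B)`. -/
def crossSet (T : X →L[ℂ] X) (A B : Set X) : Set ℕ :=
  {n | ∃ α : ℂ, 0 < ‖α‖ ∧ ‖α‖ ≤ 1 ∧ (((T ^ n) '' (α • A)) ∩ B).Nonempty}

/-- The junction set `J_T(A,B)`. -/
def junctionSet (T : X →L[ℂ] X) (A B : Set X) : Set (ℕ × ℂ) :=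
  {p | 0 < ‖p.2‖ ∧ ‖p.2‖ ≤ 1 ∧ (((T ^ p.1) '' (p.2 • A)) ∩ B).Nonempty}

/-- A subset of `ℕ × ℂ` is bifinite if it contains `{(n, a n) : n ∈ K}` for some
cofinite `K ⊆ ℕ` and some sequence `a : ℕ → ℂ`. -/
def Bifinite (A : Set (ℕ × ℂ)) : Prop :=
  ∃ K : Set ℕ, Kᶜ.Finite ∧ ∃ a : ℕ → ℂ, ∀ n ∈ K, (n, a n) ∈ A

/-- the `r`-bitransitive criterion (with scalar sequences). -/
theorem kBitransitive_of_criterion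
    {X : Type*} [NormedAddCommGroup X] [NormedSpace ℂ X] [CompleteSpace X]
    [TopologicalSpace.SeparableSpace X]
    {r : ℕ} (hr : 1 ≤ r) (T : Fin r → X →L[ℂ] X)
    (n : ℕ → ℕ) (hmono : StrictMono n) (hpos : ∀ k, 0 < n k)
    (lam : Fin r → ℕ → ℂ) (hlam : ∀ i k, 0 < ‖lam i k‖ ∧ ‖lam i k‖ ≤ 1)
    (Xs Ys : Fin r → Set X) (hXs : ∀ i, Dense (Xs i)) (hYs : ∀ i, Dense (Ys i))
    (S : Fin r → X → X) (hS : ∀ i, Set.MapsTo (S i) (Ys i) (Ys i))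
    (h1 : ∀ i, ∀ x ∈ Xs i,
      Tendsto (fun k => lam i k • (T i ^ n k) x) atTop (𝓝 0))
    (h2 : ∀ i, ∀ y ∈ Ys i,
      Tendsto (fun k => (lam i k)⁻¹ • (S i)^[n k] y) atTop (𝓝 0))
    (h3 : ∀ i, ∀ y ∈ Ys i,
      Tendsto (fun k => (T i ^ n k) ((S i)^[n k] y)) atTop (𝓝 y)) :
    kBitransitive T := by
  intro U V hU hV
  choose x hxX hxU using fun i => (hXs i).exists_mem_open (hU i).1 (hU i).2
  choose y hyY hyV using fun i => (hYs i).exists_mem_open (hV i).1 (hV i).2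
  have key : ∀ i : Fin r, ∀ᶠ k in atTop,
      (x i + (lam i k)⁻¹ • (S i)^[n k] (y i) ∈ U i) ∧
      (lam i k • (T i ^ n k) (x i) + (T i ^ n k) ((S i)^[n k] (y i)) ∈ V i) := by
    intro i
    have t1 : Tendsto (fun k => x i + (lam i k)⁻¹ • (S i)^[n k] (y i))
        atTop (𝓝 (x i)) := by
      simpa using tendsto_const_nhds.add (h2 i (y i) (hyY i))
    have t2 : Tendsto (fun k => lam i k • (T i ^ n k) (x i) +
        (T i ^ n k) ((S i)^[n k] (y i))) atTop (𝓝 (y i)) := by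
      simpa using (h1 i (x i) (hxX i)).add (h3 i (y i) (hyY i))
    exact (t1.eventually ((hU i).1.eventually_mem (hxU i))).and
      (t2.eventually ((hV i).1.eventually_mem (hyV i)))
  obtain ⟨k, hk⟩ := (eventually_all.2 key).exists
  refine ⟨n k, fun i => lam i k, fun i => hlam i k, fun i => ?_⟩
  obtain ⟨hU', hV'⟩ := hk i
  have hα : lam i k ≠ 0 := by
    have := (hlam i k).1
    simpa [norm_pos_iff] using this
  refine ⟨(T i ^ n k) (lam i k • (x i + (lam i k)⁻¹ • (S i)^[n k] (y i))),
    ⟨_, smul_mem_smul_set hU', rfl⟩, ?_⟩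
  have heq : (T i ^ n k) (lam i k • (x i + (lam i k)⁻¹ • (S i)^[n k] (y i)))
      = lam i k • (T i ^ n k) (x i) + (T i ^ n k) ((S i)^[n k] (y i)) := by
    simp [smul_add, map_add, map_smul, smul_smul, mul_inv_cancel₀ hα]
  rw [heq]
  exact hV'
end

section
/- Let X be a separable complex Banach space, let r ≥ 1, and let T₁, …, T_r be bounded linear operators on X. Suppose there exist an increasing sequence (n_k) of positive integers and, for each 1 ≤ i ≤ r, dense subsets X_i, Y_i ⊆ X and maps S_i : Y_i → Y_i such that for all x_i ∈ X_i and y_i ∈ Y_i, as k → ∞: (1) ‖T_i^{n_k} x_i‖ · ‖S_i^{n_k} y_i‖ → 0 for each i; (2) S_i^{n_k} y_i → 0 for each i; (3) T_i^{n_k} S_i^{n_k} y_i → y_i for each i. Then T₁ ⊕ … ⊕ T_r is r-bitransitive. -/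
open Filter Topology Set Pointwise

variable {X : Type*} [NormedAddCommGroup X] [NormedSpace ℂ X]

/-- the `r`-bitransitive criterion without scalar sequences. -/
theorem kBitransitive_of_criterion'
    {X : Type*} [NormedAddCommGroup X] [NormedSpace ℂ X] [CompleteSpace X]
    [TopologicalSpace.SeparableSpace X]
    {r : ℕ} (hr : 1 ≤ r) (T : Fin r → X →L[ℂ] X)
    (n : ℕ → ℕ) (hmono : StrictMono n) (hpos : ∀ k, 0 < n k)
    (Xs Ys : Fin r → Set X) (hXs : ∀ i, Dense (Xs i)) (hYs : ∀ i, Dense (Ys i))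
    (S : Fin r → X → X) (hS : ∀ i, Set.MapsTo (S i) (Ys i) (Ys i))
    (h1 : ∀ i, ∀ x ∈ Xs i, ∀ y ∈ Ys i,
      Tendsto (fun k => ‖(T i ^ n k) x‖ * ‖(S i)^[n k] y‖) atTop (𝓝 0))
    (h2 : ∀ i, ∀ y ∈ Ys i,
      Tendsto (fun k => (S i)^[n k] y) atTop (𝓝 0))
    (h3 : ∀ i, ∀ y ∈ Ys i,
      Tendsto (fun k => (T i ^ n k) ((S i)^[n k] y)) atTop (𝓝 y)) :
    kBitransitive T := by
  intro U V hU hV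
  have hx : ∀ i, ∃ x, x ∈ Xs i ∧ ∃ ε > 0, Metric.ball x ε ⊆ U i := by
    intro i
    obtain ⟨x, hxX, hxU⟩ := (hXs i).exists_mem_open (hU i).1 (hU i).2
    obtain ⟨ε, hε, hb⟩ := Metric.isOpen_iff.1 (hU i).1 x hxU
    exact ⟨x, hxX, ε, hε, hb⟩
  choose x hxX ε hε hballU using hx
  have hy : ∀ i, ∃ y, y ∈ Ys i ∧ ∃ δ > 0, Metric.ball y δ ⊆ V i := by
    intro i
    obtain ⟨y, hyY, hyV⟩ := (hYs i).exists_mem_open (hV i).1 (hV i).2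
    obtain ⟨δ, hδ, hb⟩ := Metric.isOpen_iff.1 (hV i).1 y hyV
    exact ⟨y, hyY, δ, hδ, hb⟩
  choose y hyY δ hδ hballV using hy
  have hεδ : ∀ i, 0 < ε i * δ i / 8 := fun i => by
    have := mul_pos (hε i) (hδ i); linarith
  have hev : ∀ᶠ k in atTop, ∀ i : Fin r,
      ‖(T i ^ n k) (x i)‖ * ‖(S i)^[n k] (y i)‖ < ε i * δ i / 8 ∧
      ‖(S i)^[n k] (y i)‖ < min (ε i) (ε i * δ i / 8) ∧
      ‖(T i ^ n k) ((S i)^[n k] (y i)) - y i‖ < δ i / 2 := by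
    rw [eventually_all]
    intro i
    have hA : ∀ᶠ k in atTop,
        ‖(T i ^ n k) (x i)‖ * ‖(S i)^[n k] (y i)‖ < ε i * δ i / 8 :=
      (h1 i _ (hxX i) _ (hyY i)).eventually_lt_const (hεδ i)
    have hB : ∀ᶠ k in atTop,
        ‖(S i)^[n k] (y i)‖ < min (ε i) (ε i * δ i / 8) := by
      have := (h2 i _ (hyY i)).norm
      rw [norm_zero] at this
      exact this.eventually_lt_const (lt_min (hε i) (hεδ i))
    have hC : ∀ᶠ k in atTop,
        ‖(T i ^ n k) ((S i)^[n k] (y i)) - y i‖ < δ i / 2 := by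
      have h := tendsto_sub_nhds_zero_iff.2 (h3 i _ (hyY i))
      have := h.norm
      rw [norm_zero] at this
      exact this.eventually_lt_const (half_pos (hδ i))
    filter_upwards [hA, hB, hC] with k hA hB hC
    exact ⟨hA, hB, hC⟩
  obtain ⟨k, hk⟩ := hev.exists
  set N := n k with hN
  refine ⟨N, fun i => ((min 1 (δ i / (4 * (‖(T i ^ N) (x i)‖ + 1))) : ℝ) : ℂ),
    fun i => ?_, fun i => ?_⟩
  all_goals
    have hp0 : (0:ℝ) ≤ ‖(T i ^ N) (x i)‖ := norm_nonneg _
    have hc : (0:ℝ) < 4 * (‖(T i ^ N) (x i)‖ + 1) := by linarith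
    set a : ℝ := min 1 (δ i / (4 * (‖(T i ^ N) (x i)‖ + 1))) with ha
    have hapos : 0 < a := lt_min one_pos (div_pos (hδ i) hc)
    have hna : ‖((a : ℝ) : ℂ)‖ = a := by
      rw [Complex.norm_real, Real.norm_eq_abs, abs_of_pos hapos]
  · rw [hna]
    exact ⟨hapos, min_le_left _ _⟩
  · obtain ⟨hA, hB, hC⟩ := hk i
    rw [lt_min_iff] at hB
    obtain ⟨hq1, hq2⟩ := hB
    have hane : ((a : ℝ) : ℂ) ≠ 0 := Complex.ofReal_ne_zero.2 (ne_of_gt hapos)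
    set s := (S i)^[N] (y i) with hs
    set z : X := (a : ℂ) • (x i + ((a : ℝ) : ℂ)⁻¹ • s) with hz
    have hzU : z ∈ ((a : ℝ) : ℂ) • U i := by
      refine Set.smul_mem_smul_set (hballU i ?_)
      rw [Metric.mem_ball, dist_eq_norm, add_sub_cancel_left, norm_smul, norm_inv, hna,
        inv_mul_lt_iff₀ hapos]
      have key : ‖s‖ < min (1 * ε i) ((δ i / (4 * (‖(T i ^ N) (x i)‖ + 1))) * ε i) := by
        refine lt_min (by simpa using hq1) ?_
        rw [div_mul_eq_mul_div, lt_div_iff₀ hc]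
        nlinarith [hε i, hδ i]
      calc ‖s‖ < min (1 * ε i) ((δ i / (4 * (‖(T i ^ N) (x i)‖ + 1))) * ε i) := key
        _ = a * ε i := (min_mul_of_nonneg _ _ (hε i).le).symm
    have hTz : (T i ^ N) z = ((a : ℝ) : ℂ) • (T i ^ N) (x i) + (T i ^ N) s := by
      rw [hz, smul_add, smul_inv_smul₀ hane, map_add, map_smul]
    refine ⟨(T i ^ N) z, ⟨z, hzU, rfl⟩, hballV i ?_⟩
    rw [Metric.mem_ball, dist_eq_norm, hTz]
    have hrw : ((a : ℝ) : ℂ) • (T i ^ N) (x i) + (T i ^ N) s - y i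
        = ((a : ℝ) : ℂ) • (T i ^ N) (x i) + ((T i ^ N) s - y i) := by abel
    rw [hrw]
    have hCs : ‖(T i ^ N) s - y i‖ < δ i / 2 := hC
    calc ‖((a : ℝ) : ℂ) • (T i ^ N) (x i) + ((T i ^ N) s - y i)‖
        ≤ ‖((a : ℝ) : ℂ) • (T i ^ N) (x i)‖ + ‖(T i ^ N) s - y i‖ := norm_add_le _ _
      _ < δ i := by
          rw [norm_smul, hna]
          have hap : a * ‖(T i ^ N) (x i)‖ ≤ δ i / 4 := by
            have h1 : a ≤ δ i / (4 * (‖(T i ^ N) (x i)‖ + 1)) := min_le_right _ _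
            have h2 : a * ‖(T i ^ N) (x i)‖
                ≤ (δ i / (4 * (‖(T i ^ N) (x i)‖ + 1))) * ‖(T i ^ N) (x i)‖ :=
              mul_le_mul_of_nonneg_right h1 hp0
            refine h2.trans ?_
            rw [div_mul_eq_mul_div, div_le_div_iff₀ hc (by norm_num)]
            nlinarith [hδ i]
          linarith [hδ i]
end

section
/- Let T be the bilateral forward weighted shift on ℓ²(ℤ, ℂ) defined by (Tx)(n) = w_{n-1} x(n-1) for all n ∈ ℤ, where w_n = R₁ for n ≥ 0 and w_n = R₂ for n < 0, with real numbers 1 < R₁ < R₂. Then T is compound. -/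
open Filter Topology Set Pointwise

variable {X : Type*} [NormedAddCommGroup X] [NormedSpace ℂ X]

/-!
The weights are the ratios `‖w k‖ = g (k + 1) / g k` of `g m = min (R₁ ^ m) (R₂ ^ m)`, so `Tⁿ`
sends `e j` to a multiple of `e (j + n)` of norm `g (j + n) / g j`. Hence `‖Tⁿ u‖ = O(R₁ⁿ)` for
finitely supported `u`, while every finitely supported `v` has preimages `Tⁿ (b n) = v` with
`‖b n‖ = O(R₂⁻ⁿ)`. Scaling by `α n ≈ R₁⁻ⁿ`, the vector `x = u + (α n)⁻¹ • b n` is close to `u` and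
`Tⁿ (α n • x) = α n • Tⁿ u + v` is close to `v`, since `(R₁ / R₂)ⁿ → 0`.
-/

theorem Compound.of_dense_of_tendsto {T : X →L[ℂ] X} {D₁ D₂ : Set X}
    (hD₁ : Dense D₁) (hD₂ : Dense D₂)
    (h : ∀ u ∈ D₁, ∀ v ∈ D₂, ∃ b : ℕ → X, (∀ n, (T ^ n) (b n) = v) ∧
      Tendsto (fun n => ‖b n‖) atTop (𝓝 0) ∧
      Tendsto (fun n => ‖(T ^ n) u‖ * ‖b n‖) atTop (𝓝 0)) :
    Compound T := by
  intro U V hU hU' hV hV'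
  obtain ⟨u, huU, huD⟩ := hD₁.inter_open_nonempty U hU hU'
  obtain ⟨v, hvV, hvD⟩ := hD₂.inter_open_nonempty V hV hV'
  obtain ⟨δ₁, hδ₁, hballU⟩ := Metric.isOpen_iff.mp hU u huU
  obtain ⟨δ₂, hδ₂, hballV⟩ := Metric.isOpen_iff.mp hV v hvV
  set δ := min δ₁ δ₂
  have hδ : 0 < δ := lt_min hδ₁ hδ₂
  replace hballU := (Metric.ball_subset_ball (min_le_left δ₁ δ₂)).trans hballU
  replace hballV := (Metric.ball_subset_ball (min_le_right δ₁ δ₂)).trans hballV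
  obtain ⟨b, hTb, hb, hub⟩ := h u huD v hvD
  have hsmall : ∀ᶠ n in atTop, ‖(T ^ n) u‖ * ‖b n‖ / δ + ‖b n‖ < δ :=
    ((hub.div_const δ).add hb).eventually (gt_mem_nhds (by simpa using hδ))
  obtain ⟨N, hN⟩ := eventually_atTop.mp hsmall
  -- `α n = δ / (‖Tⁿ u‖ + δ)` keeps `α n • Tⁿ u` inside the `δ`-ball, and `(α n)⁻¹ • b n`
  -- is small because `‖Tⁿ u‖ * ‖b n‖ → 0`.
  refine ⟨N, fun n => ((δ / (‖(T ^ n) u‖ + δ) : ℝ) : ℂ), fun n hn => ?_⟩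
  set t := ‖(T ^ n) u‖
  have ht₀ : 0 ≤ t := norm_nonneg _
  have hα : ‖((δ / (t + δ) : ℝ) : ℂ)‖ = δ / (t + δ) := by
    rw [Complex.norm_real, Real.norm_of_nonneg (by positivity)]
  set α : ℂ := ((δ / (t + δ) : ℝ) : ℂ)
  have hα₀ : α ≠ 0 := by
    rw [← norm_ne_zero_iff, hα]; positivity
  refine ⟨⟨by rw [hα]; positivity, by rw [hα, div_le_one (by positivity)]; linarith⟩, ?_⟩
  have hx : u + α⁻¹ • b n ∈ U := by
    refine hballU ?_
    rw [Metric.mem_ball, dist_eq_norm, add_sub_cancel_left, norm_smul, norm_inv, hα, inv_div]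
    calc (t + δ) / δ * ‖b n‖ = t * ‖b n‖ / δ + ‖b n‖ := by field_simp
      _ < δ := hN n hn
  show ((T ^ n) '' (α • U) ∩ V).Nonempty
  refine ⟨_, ⟨_, smul_mem_smul_set hx, rfl⟩, hballV ?_⟩
  rw [smul_add, smul_inv_smul₀ hα₀, map_add, map_smul, hTb, Metric.mem_ball, dist_eq_norm,
    add_sub_cancel_right, norm_smul, hα, div_mul_eq_mul_div, div_lt_iff₀ (by positivity)]
  nlinarith

theorem Compound.of_dense_of_isBigO {T : X →L[ℂ] X} {D₁ D₂ : Set X} {r s : ℝ}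
    (hr : 0 ≤ r) (hrs : r < s) (hs : 1 < s) (hD₁ : Dense D₁) (hD₂ : Dense D₂)
    (hgrowth : ∀ u ∈ D₁, (fun n => (T ^ n) u) =O[atTop] (fun n => r ^ n))
    (hback : ∀ v ∈ D₂, ∃ b : ℕ → X, (∀ n, (T ^ n) (b n) = v) ∧
      b =O[atTop] (fun n => s⁻¹ ^ n)) :
    Compound T := by
  have hs₀ : 0 < s := by linarith
  refine .of_dense_of_tendsto hD₁ hD₂ fun u hu v hv => ?_
  obtain ⟨b, hTb, hb⟩ := hback v hv
  refine ⟨b, hTb, hb.norm_left.trans_tendsto ?_, ?_⟩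
  · exact tendsto_pow_atTop_nhds_zero_of_lt_one (by positivity) (inv_lt_one_of_one_lt₀ hs)
  · refine ((hgrowth u hu).norm_left.mul hb.norm_left).trans_tendsto ?_
    simp_rw [← mul_pow]
    exact tendsto_pow_atTop_nhds_zero_of_lt_one (by positivity)
      (by rw [← div_eq_mul_inv, div_lt_one hs₀]; exact hrs)

theorem lp.dense_addSubmonoidClosure_range_single {ι : Type*} [DecidableEq ι] {E : ι → Type*}
    [∀ i, NormedAddCommGroup (E i)] {p : ENNReal} [Fact (1 ≤ p)] (hp : p ≠ ⊤) :
    Dense (AddSubmonoid.closure (range fun x : Σ i, E i => lp.single p x.1 x.2) :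
      Set (lp E p)) := fun f =>
  mem_closure_of_tendsto (lp.hasSum_single hp f) <| Eventually.of_forall fun _ =>
    sum_mem fun i _ => AddSubmonoid.subset_closure ⟨⟨i, f i⟩, rfl⟩

theorem norm_prod_range_eq_div {𝕜 : Type*} [NormedField 𝕜] {w : ℤ → 𝕜} {g : ℤ → ℝ}
    (hg : ∀ k, ‖w k‖ = g (k + 1) / g k) (hg₀ : ∀ k, 0 < g k) (j : ℤ) (n : ℕ) :
    ‖∏ ν ∈ Finset.range n, w (j + ν)‖ = g (j + n) / g j := by
  induction n with
  | zero => simp [(hg₀ j).ne']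
  | succ n ih =>
    rw [Finset.prod_range_succ, norm_mul, ih, hg, Nat.cast_succ, ← add_assoc]
    field_simp [(hg₀ (j + n)).ne']

section WeightedShift

local notation "ℓ²" => lp (fun _ : ℤ => ℂ) 2

variable {w : ℤ → ℂ} {T : ℓ² →L[ℂ] ℓ²}

theorem weightedShift_single (hT : ∀ (x : ℓ²) (n : ℤ), T x n = w (n - 1) * x (n - 1))
    (j : ℤ) (a : ℂ) : T (lp.single 2 j a) = lp.single 2 (j + 1) (w j * a) := by
  ext n
  rw [hT]
  by_cases h : n = j + 1
  · subst h
    simp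
  · rw [lp.single_apply_ne _ _ _ (by omega), lp.single_apply_ne _ _ _ h, mul_zero]

theorem weightedShift_pow_single (hT : ∀ (x : ℓ²) (n : ℤ), T x n = w (n - 1) * x (n - 1))
    (n : ℕ) (j : ℤ) (a : ℂ) :
    (T ^ n) (lp.single 2 j a) =
      lp.single 2 (j + n) ((∏ ν ∈ Finset.range n, w (j + ν)) * a) := by
  induction n with
  | zero => simp
  | succ n ih =>
    rw [pow_succ', mul_apply_eq_comp, ih, weightedShift_single hT,
      Finset.prod_range_succ, Nat.cast_succ, add_assoc]
    ring_nf

variable {g : ℤ → ℝ}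

theorem weightedShift_pow_single_isBigO
    (hT : ∀ (x : ℓ²) (n : ℤ), T x n = w (n - 1) * x (n - 1))
    (hg : ∀ k, ‖w k‖ = g (k + 1) / g k) (hg₀ : ∀ k, 0 < g k) {r : ℝ} (hr : 0 < r)
    (hgr : ∀ m, g m ≤ r ^ m) (j : ℤ) (a : ℂ) :
    (fun n : ℕ => (T ^ n) (lp.single 2 j a)) =O[atTop] (fun n => r ^ n) := by
  refine Asymptotics.IsBigO.of_bound (‖a‖ * r ^ j / g j) (Eventually.of_forall fun n => ?_)
  rw [weightedShift_pow_single hT, lp.norm_single (by norm_num), norm_mul,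
    norm_prod_range_eq_div hg hg₀, Real.norm_of_nonneg (by positivity)]
  calc g (j + n) / g j * ‖a‖ ≤ r ^ (j + n) / g j * ‖a‖ := by
        gcongr
        · exact (hg₀ j).le
        · exact hgr _
    _ = ‖a‖ * r ^ j / g j * r ^ n := by
        rw [zpow_add₀ hr.ne', zpow_natCast]
        ring

theorem exists_weightedShift_pow_eq_single
    (hT : ∀ (x : ℓ²) (n : ℤ), T x n = w (n - 1) * x (n - 1))
    (hg : ∀ k, ‖w k‖ = g (k + 1) / g k) (hg₀ : ∀ k, 0 < g k) {s : ℝ} (hs : 0 < s)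
    (hgs : ∀ m, g m ≤ s ^ m) (j : ℤ) (a : ℂ) :
    ∃ b : ℕ → ℓ², (∀ n, (T ^ n) (b n) = lp.single 2 j a) ∧
      b =O[atTop] (fun n => s⁻¹ ^ n) := by
  have hprod (n : ℕ) : ‖∏ ν ∈ Finset.range n, w (j - n + ν)‖ = g j / g (j - n) := by
    rw [norm_prod_range_eq_div hg hg₀, sub_add_cancel]
  have hprod₀ (n : ℕ) : ∏ ν ∈ Finset.range n, w (j - n + ν) ≠ 0 := by
    rw [← norm_ne_zero_iff, hprod]
    exact (div_pos (hg₀ _) (hg₀ _)).ne'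
  refine ⟨fun n => lp.single 2 (j - n) (a / ∏ ν ∈ Finset.range n, w (j - n + ν)),
    fun n => ?_, Asymptotics.IsBigO.of_bound (‖a‖ * s ^ j / g j)
      (Eventually.of_forall fun n => ?_)⟩
  · rw [weightedShift_pow_single hT, sub_add_cancel, mul_div_cancel₀ _ (hprod₀ n)]
  · rw [lp.norm_single (by norm_num), norm_div, hprod, norm_pow, norm_inv,
      Real.norm_of_nonneg hs.le, div_div_eq_mul_div]
    calc ‖a‖ * g (j - n) / g j ≤ ‖a‖ * s ^ (j - n) / g j := by
          gcongr
          · exact (hg₀ j).le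
          · exact hgs _
      _ = ‖a‖ * s ^ j / g j * s⁻¹ ^ n := by
          rw [zpow_sub₀ hs.ne', zpow_natCast, inv_pow]
          ring

theorem weightedShift_compound_of_norm_eq_div
    (hT : ∀ (x : ℓ²) (n : ℤ), T x n = w (n - 1) * x (n - 1))
    (hg : ∀ k, ‖w k‖ = g (k + 1) / g k) (hg₀ : ∀ k, 0 < g k) {r s : ℝ} (hr : 0 < r)
    (hrs : r < s) (hs : 1 < s) (hgr : ∀ m, g m ≤ r ^ m) (hgs : ∀ m, g m ≤ s ^ m) :
    Compound T := by
  have hs₀ : 0 < s := by linarith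
  have hD := lp.dense_addSubmonoidClosure_range_single (E := fun _ : ℤ => ℂ) (p := 2) (by simp)
  refine .of_dense_of_isBigO hr.le hrs hs hD hD (fun u hu => ?_) (fun v hv => ?_)
  · induction hu using AddSubmonoid.closure_induction with
    | mem _ h =>
      obtain ⟨⟨j, a⟩, rfl⟩ := h
      exact weightedShift_pow_single_isBigO hT hg hg₀ hr hgr j a
    | zero => simpa using Asymptotics.isBigO_zero _ _
    | add _ _ _ _ h₁ h₂ => simpa using h₁.add h₂
  · induction hv using AddSubmonoid.closure_induction with
    | mem _ h =>
      obtain ⟨⟨j, a⟩, rfl⟩ := h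
      exact exists_weightedShift_pow_eq_single hT hg hg₀ hs₀ hgs j a
    | zero => exact ⟨0, fun n => map_zero _, Asymptotics.isBigO_zero _ _⟩
    | add _ _ _ _ h₁ h₂ =>
      obtain ⟨b₁, hb₁, hb₁'⟩ := h₁
      obtain ⟨b₂, hb₂, hb₂'⟩ := h₂
      exact ⟨b₁ + b₂, fun n => by rw [Pi.add_apply, map_add, hb₁, hb₂], hb₁'.add hb₂'⟩

end WeightedShift

theorem min_zpow_of_nonneg {a b : ℝ} (ha : 0 ≤ a) (hab : a ≤ b) {m : ℤ} (hm : 0 ≤ m) :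
    min (a ^ m) (b ^ m) = a ^ m :=
  min_eq_left (zpow_le_zpow_left₀ hm ha hab)

theorem min_zpow_of_nonpos {a b : ℝ} (ha : 0 < a) (hab : a ≤ b) {m : ℤ} (hm : m ≤ 0) :
    min (a ^ m) (b ^ m) = b ^ m := by
  have := zpow_le_zpow_left₀ (neg_nonneg.2 hm) (inv_nonneg.2 (ha.trans_le hab).le)
    (inv_anti₀ ha hab)
  rw [inv_zpow', inv_zpow', neg_neg] at this
  exact min_eq_right this

/-- the bilateral forward weighted shift on `ℓ²(ℤ, ℂ)` with weights
`wₙ = R₁` for `n ≥ 0` and `wₙ = R₂` for `n < 0`, where `1 < R₁ < R₂`, is compound. -/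
theorem weightedShift_compound (R₁ R₂ : ℝ) (hR₁ : 1 < R₁) (hR₁₂ : R₁ < R₂)
    (w : ℤ → ℂ) (hw : ∀ n : ℤ, w n = if 0 ≤ n then (R₁ : ℂ) else (R₂ : ℂ))
    (T : lp (fun _ : ℤ => ℂ) 2 →L[ℂ] lp (fun _ : ℤ => ℂ) 2)
    (hT : ∀ (x : lp (fun _ : ℤ => ℂ) 2) (n : ℤ), T x n = w (n - 1) * x (n - 1)) :
    Compound T := by
  have h₁ : 0 < R₁ := by linarith
  have h₂ : 0 < R₂ := by linarith
  have hg (k : ℤ) : ‖w k‖ = min (R₁ ^ (k + 1)) (R₂ ^ (k + 1)) / min (R₁ ^ k) (R₂ ^ k) := by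
    rw [hw, apply_ite norm, Complex.norm_real, Complex.norm_real, Real.norm_of_nonneg h₁.le,
      Real.norm_of_nonneg h₂.le]
    split_ifs with hk
    · rw [min_zpow_of_nonneg h₁.le hR₁₂.le hk, min_zpow_of_nonneg h₁.le hR₁₂.le (by omega),
        zpow_add_one₀ h₁.ne', mul_div_cancel_left₀ _ (zpow_ne_zero _ h₁.ne')]
    · rw [min_zpow_of_nonpos h₁ hR₁₂.le (by omega), min_zpow_of_nonpos h₁ hR₁₂.le (by omega),
        zpow_add_one₀ h₂.ne', mul_div_cancel_left₀ _ (zpow_ne_zero _ h₂.ne')]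
  exact weightedShift_compound_of_norm_eq_div hT hg (fun m => by positivity) h₁ hR₁₂
    (by linarith) (fun m => min_le_left _ _) (fun m => min_le_right _ _)
end

section
/- Let T be the bilateral forward weighted shift on ℓ²(ℤ, ℂ) defined by (Tx)(n) = w_{n-1} x(n-1) for all n ∈ ℤ, where w_n = R₁ for n ≥ 0 and w_n = R₂ for n < 0, with real numbers 1 < R₁ < R₂. Then T is not topologically mixing. -/
open Filter Topology Set Pointwise

variable {X : Type*} [NormedAddCommGroup X] [NormedSpace ℂ X]

/-! All weights have modulus at least `1`, so the shift never decreases norms. Hence no iterate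
sends a point of the open set `{x | 1 < ‖x‖}` into the open unit ball. -/

theorem lp.norm_le_norm_of_norm_comp_equiv_le {ι : Type*} {E : ι → Type*}
    [∀ i, NormedAddCommGroup (E i)] {p : ENNReal} (hp : 0 < p.toReal) (e : ι ≃ ι)
    {x y : lp E p} (hxy : ∀ i, ‖x (e i)‖ ≤ ‖y i‖) : ‖x‖ ≤ ‖y‖ := by
  refine lp.norm_le_of_tsum_le hp (lp.norm_nonneg' y) ?_
  have hy : Summable fun i => ‖y i‖ ^ p.toReal := (lp.memℓp y).summable hp
  have hle : ∀ i, ‖x (e i)‖ ^ p.toReal ≤ ‖y i‖ ^ p.toReal := fun i =>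
    Real.rpow_le_rpow (norm_nonneg _) (hxy i) hp.le
  calc ∑' i, ‖x i‖ ^ p.toReal = ∑' i, ‖x (e i)‖ ^ p.toReal :=
        (e.tsum_eq fun i => ‖x i‖ ^ p.toReal).symm
    _ ≤ ∑' i, ‖y i‖ ^ p.toReal :=
        (hy.of_nonneg_of_le (fun _ => by positivity) hle).tsum_le_tsum hle hy
    _ = ‖y‖ ^ p.toReal := (lp.norm_rpow_eq_tsum hp y).symm

theorem norm_le_norm_pow_apply {T : X →L[ℂ] X} (hT : ∀ x, ‖x‖ ≤ ‖T x‖) (n : ℕ) (x : X) :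
    ‖x‖ ≤ ‖(T ^ n) x‖ := by
  induction n generalizing x with
  | zero => simp
  | succ n ih =>
    calc ‖x‖ ≤ ‖T x‖ := hT x
      _ ≤ ‖(T ^ n) (T x)‖ := ih _
      _ = ‖(T ^ (n + 1)) x‖ := by rw [pow_succ]; rfl

theorem not_topologicallyMixing_of_norm_le_norm_apply [Nontrivial X] {T : X →L[ℂ] X}
    (hT : ∀ x, ‖x‖ ≤ ‖T x‖) : ¬ TopologicallyMixing T := by
  intro hmix
  obtain ⟨N, hN⟩ := hmix {x | 1 < ‖x‖} (Metric.ball 0 1)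
    (isOpen_lt continuous_const continuous_norm) (NormedSpace.exists_lt_norm ℂ X 1)
    Metric.isOpen_ball ⟨0, Metric.mem_ball_self one_pos⟩
  obtain ⟨_, ⟨x, hx, rfl⟩, hxV⟩ := hN N le_rfl
  rw [mem_ball_zero_iff] at hxV
  exact absurd (hx.trans_le (norm_le_norm_pow_apply hT N x)) hxV.not_gt

/-- the bilateral forward weighted shift on `ℓ²(ℤ, ℂ)` with weights
`wₙ = R₁` for `n ≥ 0` and `wₙ = R₂` for `n < 0`, where `1 < R₁ < R₂`, is not
topologically mixing. -/
theorem weightedShift_not_topologicallyMixing (R₁ R₂ : ℝ) (hR₁ : 1 < R₁) (hR₁₂ : R₁ < R₂)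
    (w : ℤ → ℂ) (hw : ∀ n : ℤ, w n = if 0 ≤ n then (R₁ : ℂ) else (R₂ : ℂ))
    (T : lp (fun _ : ℤ => ℂ) 2 →L[ℂ] lp (fun _ : ℤ => ℂ) 2)
    (hT : ∀ (x : lp (fun _ : ℤ => ℂ) 2) (n : ℤ), T x n = w (n - 1) * x (n - 1)) :
    ¬ TopologicallyMixing T := by
  have hw_one : ∀ m, 1 ≤ ‖w m‖ := fun m => by
    rw [hw m]
    split_ifs <;> rw [Complex.norm_real, Real.norm_of_nonneg (by linarith)] <;> linarith
  have : Nontrivial (lp (fun _ : ℤ => ℂ) 2) :=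
    ⟨lp.single 2 0 1, 0, fun h => by simpa using congrArg (fun x => x 0) h⟩
  refine not_topologicallyMixing_of_norm_le_norm_apply fun x =>
    lp.norm_le_norm_of_norm_comp_equiv_le (by norm_num) (Equiv.subRight 1) fun n => ?_
  rw [hT, norm_mul]
  exact le_mul_of_one_le_left (norm_nonneg _) (hw_one _)
end

section
/- Let X be a separable complex Banach space and let T be a bounded linear operator on X. Suppose there exists a real number p ≥ 1 such that both A = span{x ∈ X : Tx = αx for some α ∈ ℂ with |α| < p} and B = span{y ∈ X : Ty = λy for some λ ∈ ℂ with |λ| > p} are dense in X. Then T is compound. -/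
open Filter Topology Set Pointwise

variable {X : Type*} [NormedAddCommGroup X] [NormedSpace ℂ X]

/-! Approximate a point of `U` by `x` in the span of the eigenvectors with eigenvalues of modulus
`< p`, and a point of `V` by `y` in the span of those with eigenvalues of modulus `> p`. Then
`p⁻ⁿ Tⁿ x → 0`, while scaling each eigenvector `v` in `y` by `(p / λ_v)ⁿ` gives `zₙ → 0` with
`Tⁿ zₙ = pⁿ y`. Hence with `αₙ = p⁻ⁿ` the points `x + zₙ` eventually lie in `U` and
`Tⁿ (αₙ (x + zₙ)) = p⁻ⁿ Tⁿ x + y` eventually lies in `V`. -/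

section Eigenvectors

variable {T : X →L[ℂ] X}

theorem pow_apply_of_apply_eq_smul {l : ℂ} {v : X} (h : T v = l • v) (n : ℕ) :
    (T ^ n) v = l ^ n • v := by
  induction n with
  | zero => simp
  | succ n ih => rw [pow_succ', mul_apply_eq_comp, ih, map_smul, h, smul_smul, pow_succ]

theorem tendsto_inv_pow_smul_pow_apply_of_mem_span {r : ℝ} {x : X}
    (hx : x ∈ Submodule.span ℂ {v | ∃ α : ℂ, ‖α‖ < r ∧ T v = α • v}) :
    Tendsto (fun n : ℕ => ((r : ℂ) ^ n)⁻¹ • (T ^ n) x) atTop (𝓝 0) := by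
  induction hx using Submodule.span_induction with
  | mem v hv =>
    obtain ⟨α, hαr, hTv⟩ := hv
    have hr : 0 < r := (norm_nonneg α).trans_lt hαr
    have hratio : ‖α / r‖ < 1 := by
      rwa [norm_div, Complex.norm_real, Real.norm_of_nonneg hr.le, div_lt_one hr]
    have hterm : ∀ n : ℕ, ((r : ℂ) ^ n)⁻¹ • (T ^ n) v = (α / r) ^ n • v := fun n => by
      rw [pow_apply_of_apply_eq_smul hTv, smul_smul, div_pow, div_eq_inv_mul]
    simpa only [hterm, zero_smul] using
      (tendsto_pow_atTop_nhds_zero_of_norm_lt_one hratio).smul_const v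
  | zero => simp
  | add x y _ _ hx hy => simpa only [map_add, smul_add, add_zero] using hx.add hy
  | smul c x _ hx => simpa only [map_smul, smul_comm _ c, smul_zero] using hx.const_smul c

theorem exists_tendsto_zero_pow_apply_eq_of_mem_span {r : ℝ} (hr : 0 ≤ r) {y : X}
    (hy : y ∈ Submodule.span ℂ {v | ∃ l : ℂ, r < ‖l‖ ∧ T v = l • v}) :
    ∃ z : ℕ → X, Tendsto z atTop (𝓝 0) ∧ ∀ n, (T ^ n) (z n) = (r : ℂ) ^ n • y := by
  induction hy using Submodule.span_induction with
  | mem v hv =>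
    obtain ⟨l, hrl, hTv⟩ := hv
    have hl : l ≠ 0 := norm_pos_iff.mp (hr.trans_lt hrl)
    have hratio : ‖(r : ℂ) / l‖ < 1 := by
      rwa [norm_div, Complex.norm_real, Real.norm_of_nonneg hr, div_lt_one (hr.trans_lt hrl)]
    refine ⟨fun n => ((r : ℂ) / l) ^ n • v, ?_, fun n => ?_⟩
    · simpa only [zero_smul] using
        (tendsto_pow_atTop_nhds_zero_of_norm_lt_one hratio).smul_const v
    · rw [map_smul, pow_apply_of_apply_eq_smul hTv, smul_smul, div_pow,
        div_mul_cancel₀ _ (pow_ne_zero n hl)]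
  | zero => exact ⟨0, tendsto_const_nhds, fun n => by simp⟩
  | add x y _ _ hx hy =>
    obtain ⟨zx, hzx, hTzx⟩ := hx
    obtain ⟨zy, hzy, hTzy⟩ := hy
    refine ⟨fun n => zx n + zy n, by simpa using hzx.add hzy, fun n => ?_⟩
    rw [map_add, hTzx, hTzy, smul_add]
  | smul c x _ hx =>
    obtain ⟨z, hz, hTz⟩ := hx
    refine ⟨fun n => c • z n, by simpa using hz.const_smul c, fun n => ?_⟩
    rw [map_smul, hTz, smul_comm]

end Eigenvectors

theorem compound_of_dense_eigenvector_spans_general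
    {X : Type*} [NormedAddCommGroup X] [NormedSpace ℂ X]
    (T : X →L[ℂ] X) (p : ℝ) (hp : 1 ≤ p)
    (hA : Dense ((Submodule.span ℂ {x : X | ∃ α : ℂ, ‖α‖ < p ∧ T x = α • x} :
      Submodule ℂ X) : Set X))
    (hB : Dense ((Submodule.span ℂ {y : X | ∃ l : ℂ, p < ‖l‖ ∧ T y = l • y} :
      Submodule ℂ X) : Set X)) :
    Compound T := by
  intro U V hU hUne hV hVne
  obtain ⟨x, hxA, hxU⟩ := hA.exists_mem_open hU hUne
  obtain ⟨y, hyB, hyV⟩ := hB.exists_mem_open hV hVne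
  have hp₀ : 0 < p := zero_lt_one.trans_le hp
  obtain ⟨z, hz, hTz⟩ := exists_tendsto_zero_pow_apply_eq_of_mem_span hp₀.le hyB
  have hpn : ∀ n : ℕ, (p : ℂ) ^ n ≠ 0 := fun n =>
    pow_ne_zero n (Complex.ofReal_ne_zero.mpr hp₀.ne')
  have hw : Tendsto (fun n => x + z n) atTop (𝓝 x) := by
    simpa using tendsto_const_nhds.add hz
  have hTw : Tendsto (fun n => ((p : ℂ) ^ n)⁻¹ • (T ^ n) (x + z n)) atTop (𝓝 y) := by
    simpa only [map_add, smul_add, hTz, inv_smul_smul₀ (hpn _), zero_add] using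
      (tendsto_inv_pow_smul_pow_apply_of_mem_span hxA).add_const y
  obtain ⟨N, hN⟩ := ((hw.eventually (hU.mem_nhds hxU)).and
    (hTw.eventually (hV.mem_nhds hyV))).exists_forall_of_atTop
  refine ⟨N, fun n => ((p : ℂ) ^ n)⁻¹, fun n hn => ⟨⟨?_, ?_⟩, ?_⟩⟩
  · exact norm_pos_iff.mpr (inv_ne_zero (hpn n))
  · rw [norm_inv, norm_pow, Complex.norm_real, Real.norm_of_nonneg hp₀.le]
    exact inv_le_one_of_one_le₀ (one_le_pow₀ hp)
  · exact ⟨_, ⟨_, smul_mem_smul_set (hN n hn).1, map_smul _ _ _⟩, (hN n hn).2⟩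

/-- Godefroy–Shapiro type criterion for compound operators. -/
theorem compound_of_dense_eigenvector_spans
    {X : Type*} [NormedAddCommGroup X] [NormedSpace ℂ X] [CompleteSpace X]
    [TopologicalSpace.SeparableSpace X] (T : X →L[ℂ] X) (p : ℝ) (hp : 1 ≤ p)
    (hA : Dense ((Submodule.span ℂ {x : X | ∃ α : ℂ, ‖α‖ < p ∧ T x = α • x} :
      Submodule ℂ X) : Set X))
    (hB : Dense ((Submodule.span ℂ {y : X | ∃ l : ℂ, p < ‖l‖ ∧ T y = l • y} :
      Submodule ℂ X) : Set X)) :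
    Compound T :=
  compound_of_dense_eigenvector_spans_general T p hp hA hB
end

section
/- Let X be a separable complex Banach space and let T be a bounded linear operator on X. If both A = span{x ∈ X : Tx = αx for some α ∈ ℂ with |α| < 1} and B = span{y ∈ X : Ty = λy for some λ ∈ ℂ with |λ| > 1} are dense in X, then T is topologically mixing. -/
open Filter Topology Set Pointwise

variable {X : Type*} [NormedAddCommGroup X] [NormedSpace ℂ X]

/-!
Along the span of the eigenvectors with `|α| < 1` the orbits `T ^ n x` tend to `0`, and every
vector of the span of the eigenvectors with `|λ| > 1` is `T ^ n` of a point tending to `0`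
(use `λ⁻¹ ^ n • y` on an eigenvector `y`). Two dense sets with these properties make `T` mixing:
`x + w n` is near `x` and is sent by `T ^ n` near `y`.
-/

namespace Module.End

lemma pow_apply_of_apply_eq_smul {R M : Type*} [Semiring R] [AddCommMonoid M] [Module R M]
    {f : End R M} {x : M} {μ : R} (h : f x = μ • x) (n : ℕ) : (f ^ n) x = μ ^ n • x := by
  induction n with
  | zero => simp
  | succ n ih => rw [pow_succ', mul_apply, ih, map_smul, h, smul_smul, ← pow_succ]

variable {𝕜 E : Type*} [NormedField 𝕜] [AddCommMonoid E] [Module 𝕜 E] [TopologicalSpace E]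
  [ContinuousAdd E] [ContinuousSMul 𝕜 E]

lemma tendsto_pow_apply_nhds_zero_of_mem_span {f : End 𝕜 E} {z : E}
    (hz : z ∈ Submodule.span 𝕜 {x : E | ∃ μ : 𝕜, ‖μ‖ < 1 ∧ f x = μ • x}) :
    Tendsto (fun n ↦ (f ^ n) z) atTop (𝓝 0) := by
  induction hz using Submodule.span_induction with
  | mem x hx =>
    obtain ⟨μ, hμ, hfx⟩ := hx
    simp_rw [pow_apply_of_apply_eq_smul hfx]
    simpa using (tendsto_pow_atTop_nhds_zero_of_norm_lt_one hμ).smul_const x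
  | zero => simpa using tendsto_const_nhds
  | add x y _ _ hx hy => simpa using hx.add hy
  | smul c x _ hx => simpa using hx.const_smul c

lemma exists_tendsto_nhds_zero_pow_apply_eq_of_mem_span {f : End 𝕜 E} {z : E}
    (hz : z ∈ Submodule.span 𝕜 {x : E | ∃ μ : 𝕜, 1 < ‖μ‖ ∧ f x = μ • x}) :
    ∃ w : ℕ → E, Tendsto w atTop (𝓝 0) ∧ ∀ n, (f ^ n) (w n) = z := by
  induction hz using Submodule.span_induction with
  | mem x hx =>
    obtain ⟨μ, hμ, hfx⟩ := hx
    have hμ₀ : μ ≠ 0 := norm_pos_iff.mp (one_pos.trans hμ)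
    have hμinv : ‖μ⁻¹‖ < 1 := by rw [norm_inv]; exact inv_lt_one_of_one_lt₀ hμ
    refine ⟨fun n ↦ μ⁻¹ ^ n • x, ?_, fun n ↦ ?_⟩
    · simpa using (tendsto_pow_atTop_nhds_zero_of_norm_lt_one hμinv).smul_const x
    · rw [map_smul, pow_apply_of_apply_eq_smul hfx, smul_smul, ← mul_pow, inv_mul_cancel₀ hμ₀,
        one_pow, one_smul]
  | zero => exact ⟨fun _ ↦ 0, tendsto_const_nhds, by simp⟩
  | add x y _ _ hx hy =>
    obtain ⟨u, hu, hfu⟩ := hx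
    obtain ⟨v, hv, hfv⟩ := hy
    exact ⟨fun n ↦ u n + v n, by simpa using hu.add hv, fun n ↦ by simp [hfu, hfv]⟩
  | smul c x _ hx =>
    obtain ⟨u, hu, hfu⟩ := hx
    exact ⟨fun n ↦ c • u n, by simpa using hu.const_smul c, fun n ↦ by simp [hfu]⟩

end Module.End

/-- A form of Kitai's criterion. -/
theorem topologicallyMixing_of_dense_tendsto_nhds_zero (T : X →L[ℂ] X) {D₁ D₂ : Set X}
    (hD₁ : Dense D₁) (hD₂ : Dense D₂)
    (h₁ : ∀ x ∈ D₁, Tendsto (fun n ↦ (T ^ n) x) atTop (𝓝 0))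
    (h₂ : ∀ y ∈ D₂, ∃ w : ℕ → X, Tendsto w atTop (𝓝 0) ∧ ∀ n, (T ^ n) (w n) = y) :
    TopologicallyMixing T := by
  intro U V hU hUne hV hVne
  obtain ⟨x, hxD, hxU⟩ := hD₁.exists_mem_open hU hUne
  obtain ⟨y, hyD, hyV⟩ := hD₂.exists_mem_open hV hVne
  obtain ⟨w, hw, hTw⟩ := h₂ y hyD
  have hU' : ∀ᶠ n in atTop, x + w n ∈ U := by
    have : Tendsto (fun n ↦ x + w n) atTop (𝓝 x) := by simpa using hw.const_add x
    exact this.eventually (hU.mem_nhds hxU)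
  have hV' : ∀ᶠ n in atTop, (T ^ n) x + y ∈ V := by
    have : Tendsto (fun n ↦ (T ^ n) x + y) atTop (𝓝 y) := by simpa using (h₁ x hxD).add_const y
    exact this.eventually (hV.mem_nhds hyV)
  obtain ⟨N, hN⟩ := eventually_atTop.mp (hU'.and hV')
  refine ⟨N, fun n hn ↦ ⟨(T ^ n) (x + w n), mem_image_of_mem _ (hN n hn).1, ?_⟩⟩
  rw [map_add, hTw n]
  exact (hN n hn).2

theorem topologicallyMixing_of_dense_eigenvector_spans_general
    {X : Type*} [NormedAddCommGroup X] [NormedSpace ℂ X] (T : X →L[ℂ] X)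
    (hA : Dense ((Submodule.span ℂ {x : X | ∃ α : ℂ, ‖α‖ < 1 ∧ T x = α • x} :
      Submodule ℂ X) : Set X))
    (hB : Dense ((Submodule.span ℂ {y : X | ∃ l : ℂ, 1 < ‖l‖ ∧ T y = l • y} :
      Submodule ℂ X) : Set X)) :
    TopologicallyMixing T := by
  refine topologicallyMixing_of_dense_tendsto_nhds_zero T hA hB (fun x hx ↦ ?_) (fun y hy ↦ ?_)
  · simpa [← ContinuousLinearMap.toLinearMap_pow] using
      Module.End.tendsto_pow_apply_nhds_zero_of_mem_span (f := (T : X →ₗ[ℂ] X)) hx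
  · simpa [← ContinuousLinearMap.toLinearMap_pow] using
      Module.End.exists_tendsto_nhds_zero_pow_apply_eq_of_mem_span (f := (T : X →ₗ[ℂ] X)) hy

/-- Godefroy–Shapiro criterion for topologically mixing operators. -/
theorem topologicallyMixing_of_dense_eigenvector_spans
    {X : Type*} [NormedAddCommGroup X] [NormedSpace ℂ X] [CompleteSpace X]
    [TopologicalSpace.SeparableSpace X] (T : X →L[ℂ] X)
    (hA : Dense ((Submodule.span ℂ {x : X | ∃ α : ℂ, ‖α‖ < 1 ∧ T x = α • x} :
      Submodule ℂ X) : Set X))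
    (hB : Dense ((Submodule.span ℂ {y : X | ∃ l : ℂ, 1 < ‖l‖ ∧ T y = l • y} :
      Submodule ℂ X) : Set X)) :
    TopologicallyMixing T :=
  topologicallyMixing_of_dense_eigenvector_spans_general T hA hB
end

section
/- Let X be a separable complex Banach space and let T be a bounded linear operator on X. Suppose there exist a sequence (λ_n) ⊂ ℂ \ {0} with |λ_n| ≤ 1 for all n ∈ ℕ, dense subsets D₁, D₂ ⊆ X, and a sequence of maps S_n : D₂ → X such that, as n → ∞: (1) λ_n T^n x → 0 for all x ∈ D₁; (2) (1/λ_n) S_n y → 0 for all y ∈ D₂; (3) T^n S_n y → y for all y ∈ D₂. Then T is compound. -/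
open Filter Topology Set Pointwise

variable {X : Type*} [NormedAddCommGroup X] [NormedSpace ℂ X]

/-- the compound criterion (with a scalar sequence). -/
theorem compound_of_criterion
    {X : Type*} [NormedAddCommGroup X] [NormedSpace ℂ X] [CompleteSpace X]
    [TopologicalSpace.SeparableSpace X] (T : X →L[ℂ] X)
    (lam : ℕ → ℂ) (hlam : ∀ n, lam n ≠ 0 ∧ ‖lam n‖ ≤ 1)
    (D₁ D₂ : Set X) (hD₁ : Dense D₁) (hD₂ : Dense D₂)
    (S : ℕ → X → X)
    (h1 : ∀ x ∈ D₁, Tendsto (fun n => lam n • (T ^ n) x) atTop (𝓝 0))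
    (h2 : ∀ y ∈ D₂, Tendsto (fun n => (lam n)⁻¹ • S n y) atTop (𝓝 0))
    (h3 : ∀ y ∈ D₂, Tendsto (fun n => (T ^ n) (S n y)) atTop (𝓝 y)) :
    Compound T := by
  intro U V hUo hUne hVo hVne
  obtain ⟨x, hxD, hxU⟩ := hD₁.exists_mem_open hUo hUne
  obtain ⟨y, hyD, hyV⟩ := hD₂.exists_mem_open hVo hVne
  set f : ℕ → X := fun n => x + (lam n)⁻¹ • S n y with hf
  have hfx : Tendsto f atTop (𝓝 x) := by
    simpa using tendsto_const_nhds.add (h2 y hyD)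
  have hfU : ∀ᶠ n in atTop, f n ∈ U := hfx.eventually (hUo.mem_nhds hxU)
  have hg : Tendsto (fun n => (T ^ n) (lam n • f n)) atTop (𝓝 y) := by
    have heq : ∀ n, (T ^ n) (lam n • f n) = lam n • (T ^ n) x + (T ^ n) (S n y) := by
      intro n
      have h : lam n • f n = lam n • x + S n y := by
        rw [hf]; simp [smul_add, smul_inv_smul₀ (hlam n).1]
      rw [h, map_add, map_smul]
    simp_rw [heq]
    simpa using (h1 x hxD).add (h3 y hyD)
  have hgV : ∀ᶠ n in atTop, (T ^ n) (lam n • f n) ∈ V :=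
    hg.eventually (hVo.mem_nhds hyV)
  obtain ⟨N, hN⟩ := eventually_atTop.mp (hfU.and hgV)
  refine ⟨N, lam, fun n hn => ?_⟩
  obtain ⟨hU', hV'⟩ := hN n hn
  exact ⟨⟨norm_pos_iff.mpr (hlam n).1, (hlam n).2⟩,
    ⟨(T ^ n) (lam n • f n), ⟨lam n • f n, smul_mem_smul_set hU', rfl⟩, hV'⟩⟩
end

section
/- Let X be a separable complex Banach space and let T be a bounded linear operator on X. Suppose there exist dense subsets D₁, D₂ ⊆ X and a sequence of maps S_n : D₂ → X such that, as n → ∞: (1) ‖T^n x‖ · ‖S_n y‖ → 0 for all x ∈ D₁ and y ∈ D₂; (2) S_n y → 0 for all y ∈ D₂; (3) T^n S_n y → y for all y ∈ D₂. Then T is compound. -/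
open Filter Topology Set Pointwise

variable {X : Type*} [NormedAddCommGroup X] [NormedSpace ℂ X]

/-! For `x ∈ D₁` and `y ∈ D₂` put `uₙ = x + αₙ⁻¹ • Sₙ y`, so that
`Tⁿ (αₙ • uₙ) = αₙ • Tⁿ x + Tⁿ (Sₙ y)`. Then `uₙ → x` and `Tⁿ (αₙ • uₙ) → y` as soon as the real
scalars `0 < αₙ ≤ 1` satisfy `αₙ ‖Tⁿ x‖ → 0` and `‖Sₙ y‖ / αₙ → 0`. Such scalars exist because
`‖Tⁿ x‖ ‖Sₙ y‖ → 0` and `‖Sₙ y‖ → 0`: with `aₙ = ‖Tⁿ x‖`, `bₙ = ‖Sₙ y‖` and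
`pₙ = bₙ (aₙ + 1) + 1 / (n + 1) → 0`, take `αₙ = min 1 (√pₙ / (aₙ + 1))`. -/

lemma exists_scaling_of_tendsto_mul {a b : ℕ → ℝ} (ha : ∀ n, 0 ≤ a n) (hb : ∀ n, 0 ≤ b n)
    (hab : Tendsto (fun n => a n * b n) atTop (𝓝 0)) (hb0 : Tendsto b atTop (𝓝 0)) :
    ∃ α : ℕ → ℝ, (∀ n, 0 < α n ∧ α n ≤ 1) ∧
      Tendsto (fun n => α n * a n) atTop (𝓝 0) ∧ Tendsto (fun n => b n / α n) atTop (𝓝 0) := by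
  set p : ℕ → ℝ := fun n => b n * (a n + 1) + 1 / ((n : ℝ) + 1)
  set q : ℕ → ℝ := fun n => √(p n)
  have ha1 (n : ℕ) : 0 < a n + 1 := by linarith [ha n]
  have hp (n : ℕ) : 0 < p n := by have := hb n; have := ha1 n; positivity
  have hq (n : ℕ) : 0 < q n := Real.sqrt_pos.mpr (hp n)
  have hq0 : Tendsto q atTop (𝓝 0) := by
    have hp0 : Tendsto p atTop (𝓝 0) := by
      have := (hab.add hb0).add tendsto_one_div_add_atTop_nhds_zero_nat
      rw [add_zero, add_zero] at this
      exact this.congr fun n => by simp only [p]; ring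
    simpa using hp0.sqrt
  refine ⟨fun n => min 1 (q n / (a n + 1)), fun n => ⟨lt_min one_pos (div_pos (hq n) (ha1 n)),
    min_le_left _ _⟩, ?_, ?_⟩
  · refine squeeze_zero (fun n => ?_) (fun n => ?_) hq0
    · exact mul_nonneg (le_min zero_le_one (div_pos (hq n) (ha1 n)).le) (ha n)
    · calc min 1 (q n / (a n + 1)) * a n ≤ q n / (a n + 1) * (a n + 1) :=
          mul_le_mul (min_le_right _ _) (by linarith) (ha n) (div_pos (hq n) (ha1 n)).le
        _ = q n := div_mul_cancel₀ _ (ha1 n).ne'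
  · refine squeeze_zero (fun n => ?_) (fun n => ?_) (by simpa using hb0.add hq0)
    · exact div_nonneg (hb n) (le_min zero_le_one (div_pos (hq n) (ha1 n)).le)
    · dsimp only
      rcases min_choice 1 (q n / (a n + 1)) with h | h <;> rw [h]
      · simp [(hq n).le]
      · have hbp : b n * (a n + 1) ≤ p n := le_add_of_nonneg_right (by positivity)
        calc b n / (q n / (a n + 1)) = b n * (a n + 1) / q n := by field_simp
          _ ≤ p n / q n := by gcongr
          _ = q n := Real.div_sqrt
          _ ≤ b n + q n := le_add_of_nonneg_left (hb n)

lemma compound_of_tendsto_of_dense (T : X →L[ℂ] X) {D₁ D₂ : Set X} (hD₁ : Dense D₁) (hD₂ : Dense D₂)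
    (h : ∀ x ∈ D₁, ∀ y ∈ D₂, ∃ α : ℕ → ℂ, ∃ u : ℕ → X,
      (∀ n, 0 < ‖α n‖ ∧ ‖α n‖ ≤ 1) ∧ Tendsto u atTop (𝓝 x) ∧
        Tendsto (fun n => (T ^ n) (α n • u n)) atTop (𝓝 y)) :
    Compound T := by
  intro U V hU hUne hV hVne
  obtain ⟨x, hxU, hxD⟩ := hD₁.inter_open_nonempty U hU hUne
  obtain ⟨y, hyV, hyD⟩ := hD₂.inter_open_nonempty V hV hVne
  obtain ⟨α, u, hα, hux, hTuy⟩ := h x hxD y hyD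
  obtain ⟨N, hN⟩ := ((hux.eventually (hU.mem_nhds hxU)).and
    (hTuy.eventually (hV.mem_nhds hyV))).exists_forall_of_atTop
  refine ⟨N, α, fun n hn => ⟨hα n, _, ⟨_, smul_mem_smul_set (hN n hn).1, rfl⟩, (hN n hn).2⟩⟩

theorem compound_of_criterion'_general
    {X : Type*} [NormedAddCommGroup X] [NormedSpace ℂ X] (T : X →L[ℂ] X)
    (D₁ D₂ : Set X) (hD₁ : Dense D₁) (hD₂ : Dense D₂)
    (S : ℕ → X → X)
    (h1 : ∀ x ∈ D₁, ∀ y ∈ D₂,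
      Tendsto (fun n => ‖(T ^ n) x‖ * ‖S n y‖) atTop (𝓝 0))
    (h2 : ∀ y ∈ D₂, Tendsto (fun n => S n y) atTop (𝓝 0))
    (h3 : ∀ y ∈ D₂, Tendsto (fun n => (T ^ n) (S n y)) atTop (𝓝 y)) :
    Compound T := by
  refine compound_of_tendsto_of_dense T hD₁ hD₂ fun x hx y hy => ?_
  obtain ⟨α, hα, hαTx, hSα⟩ := exists_scaling_of_tendsto_mul (fun n => norm_nonneg ((T ^ n) x))
    (fun n => norm_nonneg (S n y)) (h1 x hx y hy) (by simpa using (h2 y hy).norm)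
  have hnorm (n : ℕ) : ‖(α n : ℂ)‖ = α n := by simp [abs_of_pos (hα n).1]
  refine ⟨fun n => α n, fun n => x + (α n : ℂ)⁻¹ • S n y, fun n => hnorm n ▸ hα n,
    ?_, ?_⟩
  · have hperturb : Tendsto (fun n => (α n : ℂ)⁻¹ • S n y) atTop (𝓝 0) := by
      rw [tendsto_zero_iff_norm_tendsto_zero]
      simpa only [norm_smul, norm_inv, hnorm, ← div_eq_inv_mul] using hSα
    simpa using tendsto_const_nhds.add hperturb
  · have hsplit (n : ℕ) : (T ^ n) ((α n : ℂ) • (x + (α n : ℂ)⁻¹ • S n y)) =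
        (α n : ℂ) • (T ^ n) x + (T ^ n) (S n y) := by
      rw [smul_add, smul_inv_smul₀ (Complex.ofReal_ne_zero.mpr (hα n).1.ne'), map_add, map_smul]
    have hdamped : Tendsto (fun n => (α n : ℂ) • (T ^ n) x) atTop (𝓝 0) := by
      rw [tendsto_zero_iff_norm_tendsto_zero]
      simpa only [norm_smul, hnorm] using hαTx
    simpa only [hsplit, zero_add] using hdamped.add (h3 y hy)

/-- the compound criterion without a scalar sequence. -/
theorem compound_of_criterion'
    {X : Type*} [NormedAddCommGroup X] [NormedSpace ℂ X] [CompleteSpace X]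
    [TopologicalSpace.SeparableSpace X] (T : X →L[ℂ] X)
    (D₁ D₂ : Set X) (hD₁ : Dense D₁) (hD₂ : Dense D₂)
    (S : ℕ → X → X)
    (h1 : ∀ x ∈ D₁, ∀ y ∈ D₂,
      Tendsto (fun n => ‖(T ^ n) x‖ * ‖S n y‖) atTop (𝓝 0))
    (h2 : ∀ y ∈ D₂, Tendsto (fun n => S n y) atTop (𝓝 0))
    (h3 : ∀ y ∈ D₂, Tendsto (fun n => (T ^ n) (S n y)) atTop (𝓝 y)) :
    Compound T :=
  compound_of_criterion'_general T D₁ D₂ hD₁ hD₂ S h1 h2 h3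
end

section
/- Let X be a separable complex Banach space, let k ≥ 1, and let T₁, …, T_k be bounded linear operators on X. If every T_i is disk transitive and at least k − 1 of the operators T₁, …, T_k are compound, then T₁ ⊕ … ⊕ T_k is k-bitransitive. -/
open Filter Topology Set Pointwise

variable {X : Type*} [NormedAddCommGroup X] [NormedSpace ℂ X]

/-! A disk transitive operator returns arbitrarily late: shrink `U` by a small scalar into a ball
that the finitely many maps `T ^ n`, `n < N`, send into `ball 0 r`, where `r` is chosen so that
`V \ closedBall 0 r` is nonempty; a return of the shrunken set into `V \ closedBall 0 r` then
needs `n ≥ N`. Compound operators have cofinite cross sets, so such a late return time of the one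
remaining component is shared by all the others. -/

open Metric

namespace ContinuousLinearMap

variable {𝕜 E : Type*} [NormedField 𝕜] [NormedAddCommGroup E] [NormedSpace 𝕜 E]

theorem exists_ball_mapsTo_pow_ball (T : E →L[𝕜] E) (N : ℕ) {r : ℝ} (hr : 0 < r) :
    ∃ ρ > 0, ∀ n < N, MapsTo (T ^ n) (ball 0 ρ) (ball 0 r) := by
  have hmem : ∀ n ∈ Finset.range N, (T ^ n) ⁻¹' ball 0 r ∈ 𝓝 0 := fun n _ =>
    (T ^ n).continuous.continuousAt.preimage_mem_nhds (by simpa using ball_mem_nhds 0 hr)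
  obtain ⟨ρ, hρ, hsub⟩ := Metric.mem_nhds_iff.1 ((Finset.range N).iInter_mem_sets.2 hmem)
  exact ⟨ρ, hρ, fun n hn _ hx => mem_iInter₂.1 (hsub hx) n (Finset.mem_range.2 hn)⟩

end ContinuousLinearMap

theorem exists_smul_mem_ball_zero {𝕜 E : Type*} [NontriviallyNormedField 𝕜]
    [NormedAddCommGroup E] [NormedSpace 𝕜 E] (x : E) {ρ : ℝ} (hρ : 0 < ρ) :
    ∃ c : 𝕜, c ≠ 0 ∧ ‖c‖ ≤ 1 ∧ c • x ∈ ball 0 ρ := by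
  have hsmall : ∀ᶠ c : 𝕜 in 𝓝[≠] 0, c ≠ 0 ∧ c ∈ closedBall 0 1 ∧ c • x ∈ ball 0 ρ :=
    eventually_mem_nhdsWithin.and <| nhdsWithin_le_nhds <|
      inter_mem (closedBall_mem_nhds 0 one_pos)
        ((continuous_id.smul continuous_const).tendsto' 0 0 (zero_smul 𝕜 x) (ball_mem_nhds 0 hρ))
  obtain ⟨c, hc0, hc1, hcx⟩ := hsmall.exists
  exact ⟨c, hc0, mem_closedBall_zero_iff.1 hc1, hcx⟩

theorem IsOpen.exists_mem_ne {E : Type*} [TopologicalSpace E] [PerfectSpace E] {V : Set E}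
    (hV : IsOpen V) (hVne : V.Nonempty) (x : E) : ∃ v ∈ V, v ≠ x := by
  obtain ⟨v, hv⟩ := hVne
  by_cases hvx : v = x
  · subst hvx
    exact (Filter.Eventually.and (mem_nhdsWithin_of_mem_nhds (hV.mem_nhds hv))
      eventually_mem_nhdsWithin : ∀ᶠ w in 𝓝[≠] v, w ∈ V ∧ w ≠ v).exists
  · exact ⟨v, hv, hvx⟩

theorem Compound.eventually_mem_crossSet {T : X →L[ℂ] X} (hT : Compound T) {U V : Set X}
    (hU : IsOpen U) (hUne : U.Nonempty) (hV : IsOpen V) (hVne : V.Nonempty) :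
    ∀ᶠ n in atTop, n ∈ crossSet T U V := by
  obtain ⟨N, α, hα⟩ := hT U V hU hUne hV hVne
  exact eventually_atTop.2 ⟨N, fun n hn => ⟨α n, (hα n hn).1.1, (hα n hn).1.2, (hα n hn).2⟩⟩

theorem DiskTransitive.frequently_mem_crossSet {T : X →L[ℂ] X} (hT : DiskTransitive T)
    {U V : Set X} (hU : IsOpen U) (hUne : U.Nonempty) (hV : IsOpen V) (hVne : V.Nonempty) :
    ∃ᶠ n in atTop, n ∈ crossSet T U V := by
  rw [frequently_atTop]
  intro N
  obtain ⟨u₀, hu₀⟩ := hUne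
  rcases subsingleton_or_nontrivial X with hX | hX
  · obtain ⟨v, hv⟩ := hVne
    exact ⟨N, le_rfl, 1, by simp, by simp, _, mem_image_of_mem _ (smul_mem_smul_set hu₀),
      Subsingleton.elim v ((T ^ N) ((1 : ℂ) • u₀)) ▸ hv⟩
  obtain ⟨v, hv, hv0⟩ := hV.exists_mem_ne hVne 0
  have hr : 0 < ‖v‖ / 2 := by positivity
  obtain ⟨ρ, hρ, hmaps⟩ := T.exists_ball_mapsTo_pow_ball N hr
  obtain ⟨c, hc0, hc1, hcu₀⟩ := exists_smul_mem_ball_zero (𝕜 := ℂ) u₀ hρ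
  obtain ⟨n, α, hα0, hα1, _, ⟨_, ⟨_, ⟨⟨u, hu, rfl⟩, hcu⟩, rfl⟩, rfl⟩, hV', hr'⟩ :=
    hT (c • U ∩ ball 0 ρ) (V \ closedBall 0 (‖v‖ / 2))
      ((hU.smul₀ hc0).inter isOpen_ball) ⟨c • u₀, smul_mem_smul_set hu₀, hcu₀⟩
      (hV.sdiff isClosed_closedBall)
      ⟨v, hv, by simpa [mem_closedBall_zero_iff] using half_lt_self (norm_pos_iff.2 hv0)⟩
  have hN : N ≤ n := by
    by_contra! hn
    exact hr' (ball_subset_closedBall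
      (hmaps n hn ((balanced_ball_zero (𝕜 := ℂ)).smul_mem hα1 hcu)))
  refine ⟨n, hN, α * c, ?_, ?_, _, ⟨_, smul_mem_smul_set hu, rfl⟩, ?_⟩
  · simpa [norm_mul] using mul_pos hα0 (norm_pos_iff.2 hc0)
  · simpa [norm_mul] using mul_le_one₀ hα1 (norm_nonneg c) hc1
  · rwa [mul_smul]

theorem kBitransitive_of_diskTransitive_of_compound_general
    {X : Type*} [NormedAddCommGroup X] [NormedSpace ℂ X]
    {k : ℕ} (T : Fin k → X →L[ℂ] X)
    (hDT : ∀ i, DiskTransitive (T i))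
    (hC : ∃ j : Fin k, ∀ i, i ≠ j → Compound (T i)) :
    kBitransitive T := by
  intro U V hU hV
  obtain ⟨j, hj⟩ := hC
  have hfreq := (hDT j).frequently_mem_crossSet (hU j).1 (hU j).2 (hV j).1 (hV j).2
  have hev : ∀ᶠ n in atTop, ∀ i, i ≠ j → n ∈ crossSet (T i) (U i) (V i) :=
    eventually_all.2 fun i => eventually_imp_distrib_left.2 fun hij =>
      (hj i hij).eventually_mem_crossSet (hU i).1 (hU i).2 (hV i).1 (hV i).2
  obtain ⟨n, hnj, hn⟩ := (hfreq.and_eventually hev).exists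
  have hcross : ∀ i, n ∈ crossSet (T i) (U i) (V i) := fun i =>
    if hij : i = j then hij ▸ hnj else hn i hij
  choose α hα using hcross
  exact ⟨n, α, fun i => ⟨(hα i).1, (hα i).2.1⟩, fun i => (hα i).2.2⟩

/-- if every component is disk transitive and at least `k - 1` of the
components are compound, then the direct sum is `k`-bitransitive. -/
theorem kBitransitive_of_diskTransitive_of_compound
    {X : Type*} [NormedAddCommGroup X] [NormedSpace ℂ X] [CompleteSpace X]
    [TopologicalSpace.SeparableSpace X]
    {k : ℕ} (hk : 1 ≤ k) (T : Fin k → X →L[ℂ] X)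
    (hDT : ∀ i, DiskTransitive (T i))
    (hC : ∃ j : Fin k, ∀ i, i ≠ j → Compound (T i)) :
    kBitransitive T :=
  kBitransitive_of_diskTransitive_of_compound_general T hDT hC
end

section
/- Let X be a separable complex Banach space, let r ≥ 1, and let T₁, …, T_r be bounded linear operators on X. If there exists a single increasing sequence (n_k) of positive integers such that every T_i satisfies the diskcyclic criterion with respect to (n_k), then T₁ ⊕ … ⊕ T_r is r-bitransitive. -/
open Filter Topology Set Pointwise

variable {X : Type*} [NormedAddCommGroup X] [NormedSpace ℂ X]

/-- `T` satisfies the diskcyclic criterion with respect to the increasing sequence `n`. -/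
def DiskcyclicCriterion {X : Type*} [NormedAddCommGroup X] [NormedSpace ℂ X]
    (T : X →L[ℂ] X) (n : ℕ → ℕ) : Prop :=
  ∃ D D' : Set X, Dense D ∧ Dense D' ∧
    ∃ S : X → X, Set.MapsTo S D' D' ∧
      (∀ x ∈ D, ∀ y ∈ D',
        Tendsto (fun k => ‖(T ^ n k) x‖ * ‖S^[n k] y‖) atTop (𝓝 0)) ∧
      (∀ y ∈ D', Tendsto (fun k => S^[n k] y) atTop (𝓝 0)) ∧
      (∀ y ∈ D', Tendsto (fun k => (T ^ n k) (S^[n k] y)) atTop (𝓝 y))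

lemma aux_eventually {X : Type*} [NormedAddCommGroup X] [NormedSpace ℂ X]
    (T : X →L[ℂ] X) (n : ℕ → ℕ) (h : DiskcyclicCriterion T n)
    (U V : Set X) (hUo : IsOpen U) (hUne : U.Nonempty) (hVo : IsOpen V) (hVne : V.Nonempty) :
    ∀ᶠ k in atTop, ∃ α : ℂ, 0 < ‖α‖ ∧ ‖α‖ ≤ 1 ∧ (((T ^ n k) '' (α • U)) ∩ V).Nonempty := by
  obtain ⟨D, D', hD, hD', S, hS, h1, h2, h3⟩ := h
  obtain ⟨x, hxD, hxU⟩ := hD.exists_mem_open hUo hUne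
  obtain ⟨y, hyD, hyV⟩ := hD'.exists_mem_open hVo hVne
  obtain ⟨εU, hεU, hballU⟩ := Metric.isOpen_iff.mp hUo x hxU
  obtain ⟨εV, hεV, hballV⟩ := Metric.isOpen_iff.mp hVo y hyV
  set ε : ℝ := min (min εU εV) 1 with hεdef
  have hε : 0 < ε := lt_min (lt_min hεU hεV) one_pos
  have hε1 : ε ≤ 1 := min_le_right _ _
  have hU' : Metric.ball x ε ⊆ U :=
    (Metric.ball_subset_ball (le_trans (min_le_left _ _) (min_le_left _ _))).trans hballU
  have hV' : Metric.ball y ε ⊆ V :=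
    (Metric.ball_subset_ball (le_trans (min_le_left _ _) (min_le_right _ _))).trans hballV
  have E1 : ∀ᶠ k in atTop,
      ‖(T ^ n k) x‖ * ‖S^[n k] y‖ < ε ^ 2 / 8 := by
    have := Metric.tendsto_nhds.mp (h1 x hxD y hyD) (ε ^ 2 / 8) (by positivity)
    filter_upwards [this] with k hk
    rw [Real.dist_eq, sub_zero] at hk
    calc ‖(T ^ n k) x‖ * ‖S^[n k] y‖ ≤ |‖(T ^ n k) x‖ * ‖S^[n k] y‖| := le_abs_self _
      _ < ε ^ 2 / 8 := hk
  have E2 : ∀ᶠ k in atTop, ‖S^[n k] y‖ < ε / 2 := by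
    have := Metric.tendsto_nhds.mp (h2 y hyD) (ε / 2) (by positivity)
    filter_upwards [this] with k hk
    rwa [dist_zero_right] at hk
  have E3 : ∀ᶠ k in atTop, ‖(T ^ n k) (S^[n k] y) - y‖ < ε / 2 := by
    have := Metric.tendsto_nhds.mp (h3 y hyD) (ε / 2) (by positivity)
    filter_upwards [this] with k hk
    rwa [dist_eq_norm] at hk
  filter_upwards [E1, E2, E3] with k hk1 hk2 hk3
  set a : ℝ := ‖(T ^ n k) x‖ with ha
  set b : ℝ := ‖S^[n k] y‖ with hb
  have ha0 : 0 ≤ a := norm_nonneg _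
  have hb0 : 0 ≤ b := norm_nonneg _
  set β : ℝ := max (2 * b / ε) (ε / (4 * (a + 1))) with hβdef
  have hβpos : 0 < β := lt_max_of_lt_right (by positivity)
  refine ⟨(β : ℂ), ?_, ?_, ?_⟩
  · rwa [Complex.norm_real, Real.norm_eq_abs, abs_of_pos hβpos]
  · rw [Complex.norm_real, Real.norm_eq_abs, abs_of_pos hβpos]
    refine max_le ?_ ?_
    · rw [div_le_one hε]; nlinarith
    · rw [div_le_one (by positivity)]; nlinarith
  · have hαne : (β : ℂ) ≠ 0 := by
      simp only [ne_eq, Complex.ofReal_eq_zero]; exact ne_of_gt hβpos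
    have hnormα : ‖(β : ℂ)‖ = β := by rw [Complex.norm_real, Real.norm_eq_abs, abs_of_pos hβpos]
    -- the witness point
    set u : X := x + (β : ℂ)⁻¹ • S^[n k] y with hu
    have huU : u ∈ U := by
      apply hU'
      rw [Metric.mem_ball, dist_eq_norm, hu, add_sub_cancel_left, norm_smul, norm_inv, hnormα]
      have hβb : b ≤ β * (ε / 2) := by
        have : 2 * b / ε ≤ β := le_max_left _ _
        rw [div_le_iff₀ hε] at this
        nlinarith
      calc β⁻¹ * b ≤ β⁻¹ * (β * (ε / 2)) := by
            exact mul_le_mul_of_nonneg_left hβb (by positivity)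
        _ = ε / 2 := by field_simp
        _ < ε := by linarith
    refine ⟨(T ^ n k) ((β : ℂ) • u), ⟨(β : ℂ) • u, ?_, rfl⟩, ?_⟩
    · exact Set.smul_mem_smul_set huU
    · apply hV'
      rw [Metric.mem_ball, dist_eq_norm]
      have hexp : (T ^ n k) ((β : ℂ) • u) =
          (β : ℂ) • (T ^ n k) x + (T ^ n k) (S^[n k] y) := by
        rw [hu, smul_add, smul_inv_smul₀ hαne, map_add, map_smul]
      rw [hexp]
      have hβa : β * a < ε / 2 := by
        have hmax : β * a = max (2 * b / ε * a) (ε / (4 * (a + 1)) * a) :=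
          max_mul_of_nonneg _ _ ha0
        rw [hmax]
        apply max_lt
        · rw [div_mul_eq_mul_div, div_lt_iff₀ hε]; nlinarith
        · rw [div_mul_eq_mul_div, div_lt_iff₀ (by positivity : (0:ℝ) < 4 * (a + 1))]
          nlinarith
      calc ‖(β : ℂ) • (T ^ n k) x + (T ^ n k) (S^[n k] y) - y‖
          ≤ ‖(β : ℂ) • (T ^ n k) x‖ + ‖(T ^ n k) (S^[n k] y) - y‖ := by
            rw [add_sub_assoc]; exact norm_add_le _ _
        _ = β * a + ‖(T ^ n k) (S^[n k] y) - y‖ := by rw [norm_smul, hnormα]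
        _ < ε / 2 + ε / 2 := by linarith
        _ = ε := by ring

/-- if `r` operators satisfy the diskcyclic criterion with respect to the
same increasing sequence, then their direct sum is `r`-bitransitive. -/
theorem kBitransitive_of_diskcyclicCriterion
    {X : Type*} [NormedAddCommGroup X] [NormedSpace ℂ X] [CompleteSpace X]
    [TopologicalSpace.SeparableSpace X]
    {r : ℕ} (hr : 1 ≤ r) (T : Fin r → X →L[ℂ] X)
    (n : ℕ → ℕ) (hmono : StrictMono n) (hpos : ∀ k, 0 < n k)
    (h : ∀ i, DiskcyclicCriterion (T i) n) :
    kBitransitive T := by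
  intro U V hU hV
  have H : ∀ i, ∀ᶠ k in atTop, ∃ α : ℂ, 0 < ‖α‖ ∧ ‖α‖ ≤ 1 ∧
      (((T i ^ n k) '' (α • U i)) ∩ V i).Nonempty := fun i =>
    aux_eventually (T i) n (h i) (U i) (V i) (hU i).1 (hU i).2 (hV i).1 (hV i).2
  obtain ⟨k, hk⟩ := (eventually_all.mpr H).exists
  choose α hα1 hα2 hα3 using hk
  exact ⟨n k, α, fun i => ⟨hα1 i, hα2 i⟩, hα3⟩
end
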